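/- Let M, N ≥ 1 and let ψ : ℝ³ → Mat_{M,N}(ℝ), φ : ℝ³ → Mat_{N,M}(ℝ) be smooth functions of (x, y, t) satisfying the matrix Kaup–Newell system ψ_y = ψ_xx + 2∂_x(ψφψ), φ_y = −φ_xx + 2∂_x(φψφ), together with its third-order symmetry ψ_t = ∂_x(ψ_xx + 3ψφψ_x + 3ψ_xφψ + 6ψφψφψ), φ_t = ∂_x(φ_xx − 3φψφ_x − 3φ_xψφ + 6φψφψφ). Then the N×N-matrix-valued functions f := φψ and p := φψ_x − φ_xψ + 3(φψ)² satisfy the matrix modified Kadomtsev–Petviashvili equation 4f_t = f_xxx + 3([f_xx, f] − 2f f_x f + p_y + [p, f²] + f_x p + p f_x) together with the constraint f_y = p_x + [p, f]. -/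

import Mathlib

noncomputable def pdx {V : Type*} [NormedAddCommGroup V] [NormedSpace ℝ V]
    (f : ℝ → ℝ → ℝ → V) : ℝ → ℝ → ℝ → V :=
  fun x y t => deriv (fun s => f s y t) x

noncomputable def pdy {V : Type*} [NormedAddCommGroup V] [NormedSpace ℝ V]
    (f : ℝ → ℝ → ℝ → V) : ℝ → ℝ → ℝ → V :=
  fun x y t => deriv (fun s => f x s t) y

noncomputable def pdt {V : Type*} [NormedAddCommGroup V] [NormedSpace ℝ V]
    (f : ℝ → ℝ → ℝ → V) : ℝ → ℝ → ℝ → V :=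
  fun x y t => deriv (fun s => f x y s) t

def mmul {M N K : ℕ} (A : Fin M → Fin N → ℝ) (B : Fin N → Fin K → ℝ) :
    Fin M → Fin K → ℝ :=
  fun i k => ∑ j, A i j * B j k


def idm {M : ℕ} : Fin M → Fin M → ℝ := fun i j => if i = j then (1 : ℝ) else 0

def mcomm {M : ℕ} (A B : Fin M → Fin M → ℝ) : Fin M → Fin M → ℝ :=
  mmul A B - mmul B A

noncomputable def minv {M : ℕ} (A : Fin M → Fin M → ℝ) : Fin M → Fin M → ℝ :=
  (Matrix.of A)⁻¹


section Aux

variable {V : Type*} [NormedAddCommGroup V] [NormedSpace ℝ V]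

/-- uncurry -/
def unc (f : ℝ → ℝ → ℝ → V) : ℝ × ℝ × ℝ → V := fun q => f q.1 q.2.1 q.2.2

def Sm (f : ℝ → ℝ → ℝ → V) : Prop := ContDiff ℝ (⊤ : ℕ∞) (unc f)

lemma lineX_hasDerivAt (x y t : ℝ) :
    HasDerivAt (fun s : ℝ => ((s, y, t) : ℝ × ℝ × ℝ)) (1, 0, 0) x :=
  (hasDerivAt_id x).prodMk ((hasDerivAt_const x y).prodMk (hasDerivAt_const x t))

lemma lineY_hasDerivAt (x y t : ℝ) :
    HasDerivAt (fun s : ℝ => ((x, s, t) : ℝ × ℝ × ℝ)) (0, 1, 0) y :=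
  (hasDerivAt_const y x).prodMk ((hasDerivAt_id y).prodMk (hasDerivAt_const y t))

lemma lineT_hasDerivAt (x y t : ℝ) :
    HasDerivAt (fun s : ℝ => ((x, y, s) : ℝ × ℝ × ℝ)) (0, 0, 1) t :=
  (hasDerivAt_const t x).prodMk ((hasDerivAt_const t y).prodMk (hasDerivAt_id t))

lemma Sm.fderivX {f : ℝ → ℝ → ℝ → V} (hf : Sm f) (x y t : ℝ) :
    HasDerivAt (fun s => f s y t) (fderiv ℝ (unc f) (x, y, t) (1, 0, 0)) x :=
  by have h := (((hf.differentiable (by simp)) (x, y, t)).hasFDerivAt).comp_hasDerivAt x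
      (lineX_hasDerivAt x y t); exact h

lemma Sm.fderivY {f : ℝ → ℝ → ℝ → V} (hf : Sm f) (x y t : ℝ) :
    HasDerivAt (fun s => f x s t) (fderiv ℝ (unc f) (x, y, t) (0, 1, 0)) y :=
  by have h := (((hf.differentiable (by simp)) (x, y, t)).hasFDerivAt).comp_hasDerivAt y
      (lineY_hasDerivAt x y t); exact h

lemma Sm.fderivT {f : ℝ → ℝ → ℝ → V} (hf : Sm f) (x y t : ℝ) :
    HasDerivAt (fun s => f x y s) (fderiv ℝ (unc f) (x, y, t) (0, 0, 1)) t :=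
  by have h := (((hf.differentiable (by simp)) (x, y, t)).hasFDerivAt).comp_hasDerivAt t
      (lineT_hasDerivAt x y t); exact h

lemma pdx_eq_fderiv {f : ℝ → ℝ → ℝ → V} (hf : Sm f) (x y t : ℝ) :
    pdx f x y t = fderiv ℝ (unc f) (x, y, t) (1, 0, 0) :=
  (hf.fderivX x y t).deriv

lemma pdy_eq_fderiv {f : ℝ → ℝ → ℝ → V} (hf : Sm f) (x y t : ℝ) :
    pdy f x y t = fderiv ℝ (unc f) (x, y, t) (0, 1, 0) :=
  (hf.fderivY x y t).deriv

lemma pdt_eq_fderiv {f : ℝ → ℝ → ℝ → V} (hf : Sm f) (x y t : ℝ) :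
    pdt f x y t = fderiv ℝ (unc f) (x, y, t) (0, 0, 1) :=
  (hf.fderivT x y t).deriv

lemma Sm.hasX {f : ℝ → ℝ → ℝ → V} (hf : Sm f) (x y t : ℝ) :
    HasDerivAt (fun s => f s y t) (pdx f x y t) x := by
  rw [pdx_eq_fderiv hf]; exact hf.fderivX x y t

lemma Sm.hasY {f : ℝ → ℝ → ℝ → V} (hf : Sm f) (x y t : ℝ) :
    HasDerivAt (fun s => f x s t) (pdy f x y t) y := by
  rw [pdy_eq_fderiv hf]; exact hf.fderivY x y t

lemma Sm.hasT {f : ℝ → ℝ → ℝ → V} (hf : Sm f) (x y t : ℝ) :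
    HasDerivAt (fun s => f x y s) (pdt f x y t) t := by
  rw [pdt_eq_fderiv hf]; exact hf.fderivT x y t

/-- directional derivative as function on ℝ³ -/
lemma unc_pd_eq {f : ℝ → ℝ → ℝ → V} (hf : Sm f) (v : ℝ × ℝ × ℝ) :
    ContDiff ℝ (⊤ : ℕ∞) (fun q => fderiv ℝ (unc f) q v) := by
  have h1 : ContDiff ℝ (⊤ : ℕ∞) (fderiv ℝ (unc f)) :=
    hf.fderiv_right (by exact_mod_cast le_top)
  exact (ContinuousLinearMap.apply ℝ V v).contDiff.comp h1

lemma Sm.pdxS {f : ℝ → ℝ → ℝ → V} (hf : Sm f) : Sm (pdx f) := by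
  have : unc (pdx f) = fun q => fderiv ℝ (unc f) q (1, 0, 0) := by
    funext q
    exact pdx_eq_fderiv hf q.1 q.2.1 q.2.2
  rw [Sm, this]
  exact unc_pd_eq hf _

lemma Sm.pdyS {f : ℝ → ℝ → ℝ → V} (hf : Sm f) : Sm (pdy f) := by
  have : unc (pdy f) = fun q => fderiv ℝ (unc f) q (0, 1, 0) := by
    funext q
    exact pdy_eq_fderiv hf q.1 q.2.1 q.2.2
  rw [Sm, this]
  exact unc_pd_eq hf _

/-- Clairaut -/
lemma pdx_pdy_comm {f : ℝ → ℝ → ℝ → V} (hf : Sm f) (x y t : ℝ) :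
    pdx (pdy f) x y t = pdy (pdx f) x y t := by
  set F := unc f with hF
  have hdiff : Differentiable ℝ F := hf.differentiable (by simp)
  have hC1 : ContDiff ℝ (⊤ : ℕ∞) (fderiv ℝ F) := hf.fderiv_right (by exact_mod_cast le_top)
  set q : ℝ × ℝ × ℝ := (x, y, t) with hq
  have hsnd : HasFDerivAt (fderiv ℝ F) (fderiv ℝ (fderiv ℝ F) q) q :=
    ((hC1.differentiable (by simp)) q).hasFDerivAt
  have hsymm := second_derivative_symmetric (f := F) (f' := fderiv ℝ F)
    (fun z => (hdiff z).hasFDerivAt) hsnd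
  have key : ∀ v w : ℝ × ℝ × ℝ,
      fderiv ℝ (fun z => fderiv ℝ F z w) q v = fderiv ℝ (fderiv ℝ F) q v w := by
    intro v w
    have : HasFDerivAt (fun z => fderiv ℝ F z w)
        ((ContinuousLinearMap.apply ℝ V w).comp (fderiv ℝ (fderiv ℝ F) q)) q :=
      (ContinuousLinearMap.apply ℝ V w).hasFDerivAt.comp q hsnd
    rw [this.fderiv]; rfl
  have e1 : unc (pdy f) = fun z => fderiv ℝ F z (0, 1, 0) := by
    funext z; exact pdy_eq_fderiv hf z.1 z.2.1 z.2.2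
  have e2 : unc (pdx f) = fun z => fderiv ℝ F z (1, 0, 0) := by
    funext z; exact pdx_eq_fderiv hf z.1 z.2.1 z.2.2
  calc pdx (pdy f) x y t
      = fderiv ℝ (unc (pdy f)) q (1, 0, 0) := pdx_eq_fderiv hf.pdyS x y t
    _ = fderiv ℝ (fun z => fderiv ℝ F z (0, 1, 0)) q (1, 0, 0) := by rw [e1]
    _ = fderiv ℝ (fderiv ℝ F) q (1, 0, 0) (0, 1, 0) := key _ _
    _ = fderiv ℝ (fderiv ℝ F) q (0, 1, 0) (1, 0, 0) := hsymm _ _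
    _ = fderiv ℝ (fun z => fderiv ℝ F z (1, 0, 0)) q (0, 1, 0) := (key _ _).symm
    _ = fderiv ℝ (unc (pdx f)) q (0, 1, 0) := by rw [e2]
    _ = pdy (pdx f) x y t := (pdy_eq_fderiv hf.pdxS x y t).symm

end Aux

section MMul

/-- product rule for mmul -/
lemma HasDerivAt.mmulD {a b c : ℕ} {u : ℝ → (Fin a → Fin b → ℝ)}
    {v : ℝ → (Fin b → Fin c → ℝ)} {u' v'} {s : ℝ}
    (hu : HasDerivAt u u' s) (hv : HasDerivAt v v' s) :
    HasDerivAt (fun s => mmul (u s) (v s)) (mmul u' (v s) + mmul (u s) v') s := by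
  rw [hasDerivAt_pi]
  intro i
  rw [hasDerivAt_pi]
  intro k
  have hu' : ∀ j, HasDerivAt (fun s => u s i j) (u' i j) s := fun j =>
    hasDerivAt_pi.mp (hasDerivAt_pi.mp hu i) j
  have hv' : ∀ j, HasDerivAt (fun s => v s j k) (v' j k) s := fun j =>
    hasDerivAt_pi.mp (hasDerivAt_pi.mp hv j) k
  have hsum : HasDerivAt (fun y => ∑ j : Fin b, u y i j * v y j k)
      (∑ j : Fin b, (u' i j * v s j k + u s i j * v' j k)) s :=
    HasDerivAt.fun_sum (fun j _ => (hu' j).mul (hv' j))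
  simpa [mmul, Finset.sum_add_distrib] using hsum

lemma mmul_assoc {a b c d : ℕ} (A : Fin a → Fin b → ℝ) (B : Fin b → Fin c → ℝ)
    (C : Fin c → Fin d → ℝ) : mmul (mmul A B) C = mmul A (mmul B C) := by
  funext i l
  simp only [mmul, Finset.sum_mul, Finset.mul_sum, mul_assoc]
  exact Finset.sum_comm

lemma mmul_add {a b c : ℕ} (A : Fin a → Fin b → ℝ) (B C : Fin b → Fin c → ℝ) :
    mmul A (B + C) = mmul A B + mmul A C := by
  funext i k
  simp [mmul, mul_add, Finset.sum_add_distrib]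

lemma add_mmul {a b c : ℕ} (A B : Fin a → Fin b → ℝ) (C : Fin b → Fin c → ℝ) :
    mmul (A + B) C = mmul A C + mmul B C := by
  funext i k
  simp [mmul, add_mul, Finset.sum_add_distrib]

lemma mmul_smul {a b c : ℕ} (r : ℝ) (A : Fin a → Fin b → ℝ) (B : Fin b → Fin c → ℝ) :
    mmul A (r • B) = r • mmul A B := by
  funext i k
  simp [mmul, Finset.mul_sum, mul_left_comm]

lemma smul_mmul {a b c : ℕ} (r : ℝ) (A : Fin a → Fin b → ℝ) (B : Fin b → Fin c → ℝ) :
    mmul (r • A) B = r • mmul A B := by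
  funext i k
  simp [mmul, Finset.mul_sum, mul_assoc]

lemma mmul_sub {a b c : ℕ} (A : Fin a → Fin b → ℝ) (B C : Fin b → Fin c → ℝ) :
    mmul A (B - C) = mmul A B - mmul A C := by
  funext i k
  simp [mmul, mul_sub, Finset.sum_sub_distrib]

lemma sub_mmul {a b c : ℕ} (A B : Fin a → Fin b → ℝ) (C : Fin b → Fin c → ℝ) :
    mmul (A - B) C = mmul A C - mmul B C := by
  funext i k
  simp [mmul, sub_mul, Finset.sum_sub_distrib]

lemma neg_mmul {a b c : ℕ} (A : Fin a → Fin b → ℝ) (C : Fin b → Fin c → ℝ) :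
    mmul (-A) C = -mmul A C := by
  funext i k
  simp [mmul, neg_mul]

lemma mmul_neg {a b c : ℕ} (A : Fin a → Fin b → ℝ) (C : Fin b → Fin c → ℝ) :
    mmul A (-C) = -mmul A C := by
  funext i k
  simp [mmul, mul_neg]

end MMul

theorem matrix_Kaup_Newell_gives_matrix_mKP (M N : ℕ) (hM : 1 ≤ M) (hN : 1 ≤ N)
    (ψ : ℝ → ℝ → ℝ → (Fin M → Fin N → ℝ)) (φ : ℝ → ℝ → ℝ → (Fin N → Fin M → ℝ))
    (hψ : ContDiff ℝ (⊤ : ℕ∞) (fun p : ℝ × ℝ × ℝ => ψ p.1 p.2.1 p.2.2))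
    (hφ : ContDiff ℝ (⊤ : ℕ∞) (fun p : ℝ × ℝ × ℝ => φ p.1 p.2.1 p.2.2))
    (hKN₁ : ∀ x y t, pdy ψ x y t = pdx (pdx ψ) x y t
        + (2 : ℝ) • pdx (fun x y t => mmul (mmul (ψ x y t) (φ x y t)) (ψ x y t)) x y t)
    (hKN₂ : ∀ x y t, pdy φ x y t = -pdx (pdx φ) x y t
        + (2 : ℝ) • pdx (fun x y t => mmul (mmul (φ x y t) (ψ x y t)) (φ x y t)) x y t)
    (hSym₁ : ∀ x y t, pdt ψ x y t = pdx (fun x y t => pdx (pdx ψ) x y t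
        + (3 : ℝ) • mmul (mmul (ψ x y t) (φ x y t)) (pdx ψ x y t)
        + (3 : ℝ) • mmul (mmul (pdx ψ x y t) (φ x y t)) (ψ x y t)
        + (6 : ℝ) • mmul (mmul (mmul (mmul (ψ x y t) (φ x y t)) (ψ x y t)) (φ x y t)) (ψ x y t)) x y t)
    (hSym₂ : ∀ x y t, pdt φ x y t = pdx (fun x y t => pdx (pdx φ) x y t
        - (3 : ℝ) • mmul (mmul (φ x y t) (ψ x y t)) (pdx φ x y t)
        - (3 : ℝ) • mmul (mmul (pdx φ x y t) (ψ x y t)) (φ x y t)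
        + (6 : ℝ) • mmul (mmul (mmul (mmul (φ x y t) (ψ x y t)) (φ x y t)) (ψ x y t)) (φ x y t)) x y t)
    (f p : ℝ → ℝ → ℝ → (Fin N → Fin N → ℝ))
    (hf : ∀ x y t, f x y t = mmul (φ x y t) (ψ x y t))
    (hp : ∀ x y t, p x y t =
      mmul (φ x y t) (pdx ψ x y t) - mmul (pdx φ x y t) (ψ x y t)
        + (3 : ℝ) • mmul (mmul (φ x y t) (ψ x y t)) (mmul (φ x y t) (ψ x y t))) :
    (∀ x y t, (4 : ℝ) • pdt f x y t =
      pdx (pdx (pdx f)) x y t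
        + (3 : ℝ) • (mcomm (pdx (pdx f) x y t) (f x y t)
            - (2 : ℝ) • mmul (mmul (f x y t) (pdx f x y t)) (f x y t)
            + pdy p x y t + mcomm (p x y t) (mmul (f x y t) (f x y t))
            + mmul (pdx f x y t) (p x y t) + mmul (p x y t) (pdx f x y t))) ∧
    (∀ x y t, pdy f x y t = pdx p x y t + mcomm (p x y t) (f x y t)) := by
  have Sψ : Sm ψ := hψ
  have Sφ : Sm φ := hφ
  have Sψ1 : Sm (pdx ψ) := Sψ.pdxS
  have Sψ2 : Sm (pdx (pdx ψ)) := Sψ1.pdxS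
  have Sφ1 : Sm (pdx φ) := Sφ.pdxS
  have Sφ2 : Sm (pdx (pdx φ)) := Sφ1.pdxS
  -- x-derivative of the cubic terms in the Kaup–Newell system
  have E1 : ∀ x y t, pdx (fun x y t => mmul (mmul (ψ x y t) (φ x y t)) (ψ x y t)) x y t
      = mmul (mmul (pdx ψ x y t) (φ x y t) + mmul (ψ x y t) (pdx φ x y t)) (ψ x y t)
        + mmul (mmul (ψ x y t) (φ x y t)) (pdx ψ x y t) :=
    fun x y t => (((Sψ.hasX x y t).mmulD (Sφ.hasX x y t)).mmulD (Sψ.hasX x y t)).deriv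
  have E2 : ∀ x y t, pdx (fun x y t => mmul (mmul (φ x y t) (ψ x y t)) (φ x y t)) x y t
      = mmul (mmul (pdx φ x y t) (ψ x y t) + mmul (φ x y t) (pdx ψ x y t)) (φ x y t)
        + mmul (mmul (φ x y t) (ψ x y t)) (pdx φ x y t) :=
    fun x y t => (((Sφ.hasX x y t).mmulD (Sψ.hasX x y t)).mmulD (Sφ.hasX x y t)).deriv
  -- Kaup–Newell system, expanded
  have I1 : ∀ x y t, pdy ψ x y t = pdx (pdx ψ) x y t + (2 : ℝ) •
      (mmul (mmul (pdx ψ x y t) (φ x y t) + mmul (ψ x y t) (pdx φ x y t)) (ψ x y t)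
        + mmul (mmul (ψ x y t) (φ x y t)) (pdx ψ x y t)) := by
    intro x y t; rw [hKN₁ x y t, E1 x y t]
  have I2 : ∀ x y t, pdy φ x y t = -pdx (pdx φ) x y t + (2 : ℝ) •
      (mmul (mmul (pdx φ x y t) (ψ x y t) + mmul (φ x y t) (pdx ψ x y t)) (φ x y t)
        + mmul (mmul (φ x y t) (ψ x y t)) (pdx φ x y t)) := by
    intro x y t; rw [hKN₂ x y t, E2 x y t]
  -- x-derivatives of f
  have J1 : ∀ x y t, pdx f x y t
      = mmul (pdx φ x y t) (ψ x y t) + mmul (φ x y t) (pdx ψ x y t) := by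
    intro x y t
    rw [funext₃ hf]
    exact ((Sφ.hasX x y t).mmulD (Sψ.hasX x y t)).deriv
  have J2 : ∀ x y t, pdx (pdx f) x y t
      = (mmul (pdx (pdx φ) x y t) (ψ x y t) + mmul (pdx φ x y t) (pdx ψ x y t))
        + (mmul (pdx φ x y t) (pdx ψ x y t) + mmul (φ x y t) (pdx (pdx ψ) x y t)) := by
    intro x y t
    rw [funext₃ J1]
    exact (((Sφ1.hasX x y t).mmulD (Sψ.hasX x y t)).add
      ((Sφ.hasX x y t).mmulD (Sψ1.hasX x y t))).deriv
  have J3 : ∀ x y t, pdx (pdx (pdx f)) x y t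
      = ((mmul (pdx (pdx (pdx φ)) x y t) (ψ x y t) + mmul (pdx (pdx φ) x y t) (pdx ψ x y t))
          + (mmul (pdx (pdx φ) x y t) (pdx ψ x y t) + mmul (pdx φ x y t) (pdx (pdx ψ) x y t)))
        + ((mmul (pdx (pdx φ) x y t) (pdx ψ x y t) + mmul (pdx φ x y t) (pdx (pdx ψ) x y t))
          + (mmul (pdx φ x y t) (pdx (pdx ψ) x y t) + mmul (φ x y t) (pdx (pdx (pdx ψ)) x y t))) := by
    intro x y t
    rw [funext₃ J2]
    exact ((((Sφ2.hasX x y t).mmulD (Sψ.hasX x y t)).add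
        ((Sφ1.hasX x y t).mmulD (Sψ1.hasX x y t))).add
      (((Sφ1.hasX x y t).mmulD (Sψ1.hasX x y t)).add
        ((Sφ.hasX x y t).mmulD (Sψ2.hasX x y t)))).deriv
  constructor
  · -- main mKP equation
    intro x y t
    -- t-derivative of f
    have Tf : pdt f x y t
        = mmul (pdt φ x y t) (ψ x y t) + mmul (φ x y t) (pdt ψ x y t) := by
      rw [funext₃ hf]
      exact ((Sφ.hasT x y t).mmulD (Sψ.hasT x y t)).deriv
    -- x-derivative of the third-order symmetry flux for ψ
    have E3 : pdx (fun x y t => pdx (pdx ψ) x y t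
        + (3 : ℝ) • mmul (mmul (ψ x y t) (φ x y t)) (pdx ψ x y t)
        + (3 : ℝ) • mmul (mmul (pdx ψ x y t) (φ x y t)) (ψ x y t)
        + (6 : ℝ) • mmul (mmul (mmul (mmul (ψ x y t) (φ x y t)) (ψ x y t)) (φ x y t)) (ψ x y t)) x y t
        = pdx (pdx (pdx ψ)) x y t
        + (3 : ℝ) • (mmul (mmul (pdx ψ x y t) (φ x y t) + mmul (ψ x y t) (pdx φ x y t)) (pdx ψ x y t)
            + mmul (mmul (ψ x y t) (φ x y t)) (pdx (pdx ψ) x y t))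
        + (3 : ℝ) • (mmul (mmul (pdx (pdx ψ) x y t) (φ x y t) + mmul (pdx ψ x y t) (pdx φ x y t)) (ψ x y t)
            + mmul (mmul (pdx ψ x y t) (φ x y t)) (pdx ψ x y t))
        + (6 : ℝ) • (mmul (mmul (mmul (mmul (pdx ψ x y t) (φ x y t) + mmul (ψ x y t) (pdx φ x y t)) (ψ x y t)
                + mmul (mmul (ψ x y t) (φ x y t)) (pdx ψ x y t)) (φ x y t)
              + mmul (mmul (mmul (ψ x y t) (φ x y t)) (ψ x y t)) (pdx φ x y t)) (ψ x y t)
            + mmul (mmul (mmul (mmul (ψ x y t) (φ x y t)) (ψ x y t)) (φ x y t)) (pdx ψ x y t)) :=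
      ((((Sψ2.hasX x y t).add
          ((((Sψ.hasX x y t).mmulD (Sφ.hasX x y t)).mmulD (Sψ1.hasX x y t)).const_smul (3 : ℝ))).add
        ((((Sψ1.hasX x y t).mmulD (Sφ.hasX x y t)).mmulD (Sψ.hasX x y t)).const_smul (3 : ℝ))).add
        (((((((Sψ.hasX x y t).mmulD (Sφ.hasX x y t)).mmulD (Sψ.hasX x y t)).mmulD
          (Sφ.hasX x y t)).mmulD (Sψ.hasX x y t))).const_smul (6 : ℝ))).deriv
    have E4 : pdx (fun x y t => pdx (pdx φ) x y t
        - (3 : ℝ) • mmul (mmul (φ x y t) (ψ x y t)) (pdx φ x y t)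
        - (3 : ℝ) • mmul (mmul (pdx φ x y t) (ψ x y t)) (φ x y t)
        + (6 : ℝ) • mmul (mmul (mmul (mmul (φ x y t) (ψ x y t)) (φ x y t)) (ψ x y t)) (φ x y t)) x y t
        = pdx (pdx (pdx φ)) x y t
        - (3 : ℝ) • (mmul (mmul (pdx φ x y t) (ψ x y t) + mmul (φ x y t) (pdx ψ x y t)) (pdx φ x y t)
            + mmul (mmul (φ x y t) (ψ x y t)) (pdx (pdx φ) x y t))
        - (3 : ℝ) • (mmul (mmul (pdx (pdx φ) x y t) (ψ x y t) + mmul (pdx φ x y t) (pdx ψ x y t)) (φ x y t)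
            + mmul (mmul (pdx φ x y t) (ψ x y t)) (pdx φ x y t))
        + (6 : ℝ) • (mmul (mmul (mmul (mmul (pdx φ x y t) (ψ x y t) + mmul (φ x y t) (pdx ψ x y t)) (φ x y t)
                + mmul (mmul (φ x y t) (ψ x y t)) (pdx φ x y t)) (ψ x y t)
              + mmul (mmul (mmul (φ x y t) (ψ x y t)) (φ x y t)) (pdx ψ x y t)) (φ x y t)
            + mmul (mmul (mmul (mmul (φ x y t) (ψ x y t)) (φ x y t)) (ψ x y t)) (pdx φ x y t)) :=
      ((((Sφ2.hasX x y t).sub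
          ((((Sφ.hasX x y t).mmulD (Sψ.hasX x y t)).mmulD (Sφ1.hasX x y t)).const_smul (3 : ℝ))).sub
        ((((Sφ1.hasX x y t).mmulD (Sψ.hasX x y t)).mmulD (Sφ.hasX x y t)).const_smul (3 : ℝ))).add
        (((((((Sφ.hasX x y t).mmulD (Sψ.hasX x y t)).mmulD (Sφ.hasX x y t)).mmulD
          (Sψ.hasX x y t)).mmulD (Sφ.hasX x y t))).const_smul (6 : ℝ))).deriv
    -- y-derivative of p
    have Yp : pdy (fun x y t => mmul (φ x y t) (pdx ψ x y t) - mmul (pdx φ x y t) (ψ x y t)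
        + (3 : ℝ) • mmul (mmul (φ x y t) (ψ x y t)) (mmul (φ x y t) (ψ x y t))) x y t
        = (mmul (pdy φ x y t) (pdx ψ x y t) + mmul (φ x y t) (pdy (pdx ψ) x y t))
          - (mmul (pdy (pdx φ) x y t) (ψ x y t) + mmul (pdx φ x y t) (pdy ψ x y t))
          + (3 : ℝ) • (mmul (mmul (pdy φ x y t) (ψ x y t) + mmul (φ x y t) (pdy ψ x y t))
                (mmul (φ x y t) (ψ x y t))
              + mmul (mmul (φ x y t) (ψ x y t))
                (mmul (pdy φ x y t) (ψ x y t) + mmul (φ x y t) (pdy ψ x y t))) :=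
      ((((Sφ.hasY x y t).mmulD (Sψ1.hasY x y t)).sub
          ((Sφ1.hasY x y t).mmulD (Sψ.hasY x y t))).add
        ((((Sφ.hasY x y t).mmulD (Sψ.hasY x y t)).mmulD
          ((Sφ.hasY x y t).mmulD (Sψ.hasY x y t))).const_smul (3 : ℝ))).deriv
    -- x-derivative of expanded (pdy ψ), i.e. the mixed derivative
    have HK1 : pdx (fun x y t => pdx (pdx ψ) x y t + (2 : ℝ) •
        (mmul (mmul (pdx ψ x y t) (φ x y t) + mmul (ψ x y t) (pdx φ x y t)) (ψ x y t)
          + mmul (mmul (ψ x y t) (φ x y t)) (pdx ψ x y t))) x y t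
        = pdx (pdx (pdx ψ)) x y t + (2 : ℝ) •
          ((mmul ((mmul (pdx (pdx ψ) x y t) (φ x y t) + mmul (pdx ψ x y t) (pdx φ x y t))
                + (mmul (pdx ψ x y t) (pdx φ x y t) + mmul (ψ x y t) (pdx (pdx φ) x y t))) (ψ x y t)
              + mmul (mmul (pdx ψ x y t) (φ x y t) + mmul (ψ x y t) (pdx φ x y t)) (pdx ψ x y t))
            + (mmul (mmul (pdx ψ x y t) (φ x y t) + mmul (ψ x y t) (pdx φ x y t)) (pdx ψ x y t)
              + mmul (mmul (ψ x y t) (φ x y t)) (pdx (pdx ψ) x y t))) :=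
      ((Sψ2.hasX x y t).add
        ((((((Sψ1.hasX x y t).mmulD (Sφ.hasX x y t)).add
            ((Sψ.hasX x y t).mmulD (Sφ1.hasX x y t))).mmulD (Sψ.hasX x y t)).add
          (((Sψ.hasX x y t).mmulD (Sφ.hasX x y t)).mmulD (Sψ1.hasX x y t))).const_smul (2 : ℝ))).deriv
    have HK2 : pdx (fun x y t => -pdx (pdx φ) x y t + (2 : ℝ) •
        (mmul (mmul (pdx φ x y t) (ψ x y t) + mmul (φ x y t) (pdx ψ x y t)) (φ x y t)
          + mmul (mmul (φ x y t) (ψ x y t)) (pdx φ x y t))) x y t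
        = -pdx (pdx (pdx φ)) x y t + (2 : ℝ) •
          ((mmul ((mmul (pdx (pdx φ) x y t) (ψ x y t) + mmul (pdx φ x y t) (pdx ψ x y t))
                + (mmul (pdx φ x y t) (pdx ψ x y t) + mmul (φ x y t) (pdx (pdx ψ) x y t))) (φ x y t)
              + mmul (mmul (pdx φ x y t) (ψ x y t) + mmul (φ x y t) (pdx ψ x y t)) (pdx φ x y t))
            + (mmul (mmul (pdx φ x y t) (ψ x y t) + mmul (φ x y t) (pdx ψ x y t)) (pdx φ x y t)
              + mmul (mmul (φ x y t) (ψ x y t)) (pdx (pdx φ) x y t))) :=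
      (((Sφ2.hasX x y t).neg).add
        ((((((Sφ1.hasX x y t).mmulD (Sψ.hasX x y t)).add
            ((Sφ.hasX x y t).mmulD (Sψ1.hasX x y t))).mmulD (Sφ.hasX x y t)).add
          (((Sφ.hasX x y t).mmulD (Sψ.hasX x y t)).mmulD (Sφ1.hasX x y t))).const_smul (2 : ℝ))).deriv
    simp only [mcomm]
    rw [Tf, hSym₁ x y t, hSym₂ x y t, E3, E4, J3 x y t, J2 x y t, J1 x y t]
    rw [hp x y t, funext₃ hp, Yp, I1 x y t, I2 x y t,
      ← pdx_pdy_comm Sψ x y t, ← pdx_pdy_comm Sφ x y t,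
      funext₃ I1, funext₃ I2, HK1, HK2, hf x y t]
    simp only [mmul_add, add_mmul, mmul_sub, sub_mmul, mmul_smul, smul_mmul, mmul_neg,
      neg_mmul, mmul_assoc, smul_add, smul_sub, smul_neg, smul_smul]
    module
  · -- the constraint
    intro x y t
    have Tf2 : pdy f x y t
        = mmul (pdy φ x y t) (ψ x y t) + mmul (φ x y t) (pdy ψ x y t) := by
      rw [funext₃ hf]
      exact ((Sφ.hasY x y t).mmulD (Sψ.hasY x y t)).deriv
    have Xp : pdx p x y t
        = (mmul (pdx φ x y t) (pdx ψ x y t) + mmul (φ x y t) (pdx (pdx ψ) x y t))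
          - (mmul (pdx (pdx φ) x y t) (ψ x y t) + mmul (pdx φ x y t) (pdx ψ x y t))
          + (3 : ℝ) • (mmul (mmul (pdx φ x y t) (ψ x y t) + mmul (φ x y t) (pdx ψ x y t))
                (mmul (φ x y t) (ψ x y t))
              + mmul (mmul (φ x y t) (ψ x y t))
                (mmul (pdx φ x y t) (ψ x y t) + mmul (φ x y t) (pdx ψ x y t))) := by
      rw [funext₃ hp]
      exact ((((Sφ.hasX x y t).mmulD (Sψ1.hasX x y t)).sub
          ((Sφ1.hasX x y t).mmulD (Sψ.hasX x y t))).add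
        ((((Sφ.hasX x y t).mmulD (Sψ.hasX x y t)).mmulD
          ((Sφ.hasX x y t).mmulD (Sψ.hasX x y t))).const_smul (3 : ℝ))).deriv
    simp only [mcomm]
    rw [Tf2, Xp, I1 x y t, I2 x y t, hp x y t, hf x y t]
    simp only [mmul_add, add_mmul, mmul_sub, sub_mmul, mmul_smul, smul_mmul, mmul_neg,
      neg_mmul, mmul_assoc, smul_add, smul_sub, smul_neg, smul_smul]
    module
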